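/- Let m ≥ 2 and let N be a vector field smooth on a neighborhood of the closed unit ball B̄ ⊂ ℝ^m with div N = 0 on B̄, ∑_k N_k(x) x_k = 0 for all x ∈ S, and with curl-free componentwise Laplacian: ∂_j(ΔN_k)(x) = ∂_k(ΔN_j)(x) for all x ∈ B̄ and all j, k (for a divergence-free N this encodes the condition d d† d N = 0). Form the symmetric tensor field t_ij = ½(∂_i N_j + ∂_j N_i), which is traceless since div N = 0. Suppose u, w, T, smooth on B̄, give a decomposition t_ij = ◇_ij u + ½(∂_i w_j + ∂_j w_i) + T_ij on B̄ satisfying the side conditions of the rank-2 decomposition theorem: u(x) = 0 for x ∈ S; div w = 0 on B̄; ∑_k w_k(x) x_k = 0 for x ∈ S; ∑_{k,l}(∂_k w_l − ∂_l w_k)(x) x_k v_l = 0 for all x ∈ S and all v with ⟨v,x⟩ = 0; T symmetric with ∑_i T_ii = 0 and ∑_i ∂_i T_ij = 0 on B̄. Then the scalar potential u is biharmonic: Δ(Δu) = 0 on B̄. (This is the paper's claim, following Theorem 5.1, that the scalar N^{th} arising in the decomposition of ∂_{(i}N_{j)} satisfies ∂²∂²N^{th} = 0.) -/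

import Mathlib

/-!
STATEMENT 10: If N is a divergence-free vector field on the closed unit ball,
tangential on the boundary, with curl-free componentwise Laplacian (d d† d N =
0), and if t_ij = ½(∂_i N_j + ∂_j N_i) is decomposed according to the paper's
rank-2 decomposition theorem as t = ◇u + ½(∂w + (∂w)ᵀ) + T, then the scalar
potential u is biharmonic: ΔΔu = 0 on the ball.
-/

noncomputable section

/-- Euclidean space ℝ^m. -/
abbrev E (m : ℕ) := EuclideanSpace ℝ (Fin m)

/-- The closed unit ball B̄ ⊆ ℝ^m. -/
def Ball (m : ℕ) : Set (E m) := Metric.closedBall 0 1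

/-- The unit sphere S = ∂B̄ ⊆ ℝ^m. -/
def Sph (m : ℕ) : Set (E m) := Metric.sphere 0 1

/-- The i-th partial derivative (taken within the closed unit ball). -/
def pd {m : ℕ} (i : Fin m) (f : E m → ℝ) : E m → ℝ :=
  fun x => fderivWithin ℝ f (Ball m) x (EuclideanSpace.single i 1)

/-- The Euclidean Laplacian Δf = ∑ i, ∂_i ∂_i f. -/
def lap {m : ℕ} (f : E m → ℝ) : E m → ℝ :=
  fun x => ∑ i, pd i (pd i f) x

/-- The traceless Hessian operator ◇_ij u = ∂_i ∂_j u − (δ_ij/m) Δu. -/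
def diam {m : ℕ} (i j : Fin m) (f : E m → ℝ) : E m → ℝ :=
  fun x => pd i (pd j f) x - (if i = j then (1 : ℝ) else 0) / m * lap f x

variable {m : ℕ}

lemma ballU : UniqueDiffOn ℝ (Ball m) :=
  uniqueDiffOn_convex (convex_closedBall (0:E m) 1) (by
    rw [Ball, interior_closedBall (0:E m) one_ne_zero]
    exact Metric.nonempty_ball.2 one_pos)

lemma mem_closure_interior {x : E m} (hx : x ∈ Ball m) : x ∈ closure (interior (Ball m)) := by
  rw [Ball, interior_closedBall (0:E m) one_ne_zero, closure_ball (0:E m) one_ne_zero]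
  exact hx

/-- smooth on the ball -/
def Sm (m : ℕ) (f : E m → ℝ) : Prop := ContDiffOn ℝ ((⊤:ℕ∞) : WithTop ℕ∞) f (Ball m)

lemma one_le_inf : (1 : WithTop ℕ∞) ≤ ((⊤:ℕ∞) : WithTop ℕ∞) := by
  rw [show ((1:WithTop ℕ∞)) = ((1:ℕ∞):WithTop ℕ∞) by norm_cast]
  exact_mod_cast (le_top : (1:ℕ∞) ≤ ⊤)

lemma two_le_inf : (2 : WithTop ℕ∞) ≤ ((⊤:ℕ∞) : WithTop ℕ∞) := by
  rw [show ((2:WithTop ℕ∞)) = ((2:ℕ∞):WithTop ℕ∞) by norm_cast]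
  exact_mod_cast (le_top : (2:ℕ∞) ≤ ⊤)

lemma Sm.dwa {f : E m → ℝ} (hf : Sm m f) {x : E m} (hx : x ∈ Ball m) :
    DifferentiableWithinAt ℝ f (Ball m) x :=
  (hf x hx).differentiableWithinAt (zero_lt_one.trans_le one_le_inf).ne'

lemma Sm.fderivWithin {f : E m → ℝ} (hf : Sm m f) :
    ContDiffOn ℝ ((⊤:ℕ∞) : WithTop ℕ∞) (fderivWithin ℝ f (Ball m)) (Ball m) :=
  ContDiffOn.fderivWithin hf ballU (by norm_cast)

lemma Sm.pd {f : E m → ℝ} (hf : Sm m f) (i : Fin m) : Sm m (pd i f) :=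
  ContDiffOn.clm_apply hf.fderivWithin contDiffOn_const

lemma Sm.add {f g : E m → ℝ} (hf : Sm m f) (hg : Sm m g) : Sm m (fun y => f y + g y) :=
  ContDiffOn.add hf hg

lemma Sm.sub {f g : E m → ℝ} (hf : Sm m f) (hg : Sm m g) : Sm m (fun y => f y - g y) :=
  ContDiffOn.sub hf hg

lemma Sm.const_mul {f : E m → ℝ} (hf : Sm m f) (c : ℝ) : Sm m (fun y => c * f y) :=
  ContDiffOn.mul contDiffOn_const hf

lemma Sm.sum {g : Fin m → E m → ℝ} (hg : ∀ k, Sm m (g k)) :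
    Sm m (fun y => ∑ k, g k y) :=
  ContDiffOn.sum (fun k _ => hg k)

lemma Sm.lap {f : E m → ℝ} (hf : Sm m f) : Sm m (lap f) :=
  Sm.sum (fun k => (hf.pd k).pd k)

lemma pd_congr {f g : E m → ℝ} (h : ∀ y ∈ Ball m, f y = g y) {x : E m} (hx : x ∈ Ball m)
    (i : Fin m) : pd i f x = pd i g x := by
  unfold pd; rw [fderivWithin_congr h (h x hx)]

lemma pd2_congr {f g : E m → ℝ} (h : ∀ y ∈ Ball m, f y = g y) {x : E m} (hx : x ∈ Ball m)
    (i j : Fin m) : pd i (pd j f) x = pd i (pd j g) x :=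
  pd_congr (fun y hy => pd_congr h hy j) hx i

lemma pd_const (c : ℝ) {x : E m} (hx : x ∈ Ball m) (i : Fin m) :
    pd i (fun _ => c) x = 0 := by
  unfold pd; rw [fderivWithin_const_apply]; rfl

lemma pd_add {f g : E m → ℝ} (hf : Sm m f) (hg : Sm m g) {x : E m} (hx : x ∈ Ball m)
    (i : Fin m) : pd i (fun y => f y + g y) x = pd i f x + pd i g x := by
  unfold pd; rw [fderivWithin_fun_add (ballU x hx) (hf.dwa hx) (hg.dwa hx)]; rfl

lemma pd_sub {f g : E m → ℝ} (hf : Sm m f) (hg : Sm m g) {x : E m} (hx : x ∈ Ball m)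
    (i : Fin m) : pd i (fun y => f y - g y) x = pd i f x - pd i g x := by
  unfold pd; rw [fderivWithin_fun_sub (ballU x hx) (hf.dwa hx) (hg.dwa hx)]; rfl

lemma pd_const_mul {f : E m → ℝ} (hf : Sm m f) (c : ℝ) {x : E m} (hx : x ∈ Ball m)
    (i : Fin m) : pd i (fun y => c * f y) x = c * pd i f x := by
  unfold pd; rw [fderivWithin_const_mul (ballU x hx) (hf.dwa hx)]; rfl

lemma pd_sum {g : Fin m → E m → ℝ} (hg : ∀ k, Sm m (g k)) {x : E m} (hx : x ∈ Ball m)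
    (i : Fin m) : pd i (fun y => ∑ k, g k y) x = ∑ k, pd i (g k) x := by
  unfold pd
  rw [fderivWithin_fun_sum (ballU x hx) (fun k _ => (hg k).dwa hx)]
  simp

lemma pd_comm {f : E m → ℝ} (hf : Sm m f) {x : E m} (hx : x ∈ Ball m) (i j : Fin m) :
    pd i (pd j f) x = pd j (pd i f) x := by
  have hsymm : IsSymmSndFDerivWithinAt ℝ f (Ball m) x :=
    (hf x hx).isSymmSndFDerivWithinAt (by rw [minSmoothness_of_isRCLikeNormedField]; exact two_le_inf) ballU (mem_closure_interior hx) hx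
  have key : ∀ k l : Fin m, pd k (pd l f) x =
      fderivWithin ℝ (fderivWithin ℝ f (Ball m)) (Ball m) x (EuclideanSpace.single k 1)
        (EuclideanSpace.single l 1) := by
    intro k l
    show fderivWithin ℝ (fun y => (fderivWithin ℝ f (Ball m) y) (EuclideanSpace.single l 1))
        (Ball m) x (EuclideanSpace.single k 1) = _
    rw [fderivWithin_clm_apply (ballU x hx) ((hf.fderivWithin x hx).differentiableWithinAt (zero_lt_one.trans_le one_le_inf).ne')
      (differentiableWithinAt_const _)]
    simp [fderivWithin_const_apply]
  rw [key, key, hsymm.eq]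

lemma sum_pd1_zero {g : Fin m → E m → ℝ} (hg : ∀ k, Sm m (g k))
    (hzero : ∀ y ∈ Ball m, ∑ k, g k y = 0) {x : E m} (hx : x ∈ Ball m) (j : Fin m) :
    ∑ k, pd j (g k) x = 0 := by
  rw [← pd_sum hg hx j, pd_congr hzero hx j, pd_const 0 hx j]

lemma sum_pd2_zero {g : Fin m → E m → ℝ} (hg : ∀ k, Sm m (g k))
    (hzero : ∀ y ∈ Ball m, ∑ k, g k y = 0) {x : E m} (hx : x ∈ Ball m) (i j : Fin m) :
    ∑ k, pd i (pd j (g k)) x = 0 :=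
  sum_pd1_zero (fun k => (hg k).pd j) (fun y hy => sum_pd1_zero hg hzero hy j) hx i

lemma sum_pd3_a {v : Fin m → E m → ℝ} (hv : ∀ k, Sm m (v k))
    (hdiv : ∀ y ∈ Ball m, ∑ k, pd k (v k) y = 0) {x : E m} (hx : x ∈ Ball m) :
    ∑ i, ∑ j, pd i (pd j (pd i (v j))) x = 0 := by
  calc ∑ i, ∑ j, pd i (pd j (pd i (v j))) x
      = ∑ i, ∑ j, pd i (pd i (pd j (v j))) x :=
        Finset.sum_congr rfl fun i _ => Finset.sum_congr rfl fun j _ =>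
          pd_congr (fun y hy => pd_comm (hv j) hy j i) hx i
    _ = 0 := Finset.sum_eq_zero fun i _ =>
        sum_pd2_zero (fun k => (hv k).pd k) hdiv hx i i

lemma sum_pd3_b {v : Fin m → E m → ℝ} (hv : ∀ k, Sm m (v k))
    (hdiv : ∀ y ∈ Ball m, ∑ k, pd k (v k) y = 0) {x : E m} (hx : x ∈ Ball m) :
    ∑ i, ∑ j, pd i (pd j (pd j (v i))) x = 0 := by
  calc ∑ i, ∑ j, pd i (pd j (pd j (v i))) x
      = ∑ i, ∑ j, pd j (pd j (pd i (v i))) x := by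
        refine Finset.sum_congr rfl fun i _ => Finset.sum_congr rfl fun j _ => ?_
        rw [pd_comm ((hv i).pd j) hx i j]
        exact pd_congr (fun y hy => pd_comm (hv i) hy i j) hx j
    _ = ∑ j, ∑ i, pd j (pd j (pd i (v i))) x := Finset.sum_comm
    _ = 0 := Finset.sum_eq_zero fun j _ =>
        sum_pd2_zero (fun k => (hv k).pd k) hdiv hx j j

lemma sum_T_zero {T : Fin m → Fin m → E m → ℝ} (hT : ∀ i j, Sm m (T i j))
    (htr : ∀ y ∈ Ball m, ∀ j, ∑ i, pd i (T i j) y = 0) {x : E m} (hx : x ∈ Ball m) :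
    ∑ i, ∑ j, pd i (pd j (T i j)) x = 0 := by
  rw [Finset.sum_comm]
  refine Finset.sum_eq_zero fun j _ => ?_
  calc ∑ i, pd i (pd j (T i j)) x
      = ∑ i, pd j (pd i (T i j)) x :=
        Finset.sum_congr rfl fun i _ => pd_comm (hT i j) hx i j
    _ = 0 := sum_pd1_zero (fun i => (hT i j).pd i) (fun y hy => htr y hy j) hx j

lemma pd2_add {f g : E m → ℝ} (hf : Sm m f) (hg : Sm m g) {x : E m} (hx : x ∈ Ball m)
    (i j : Fin m) :
    pd i (pd j (fun y => f y + g y)) x = pd i (pd j f) x + pd i (pd j g) x :=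
  calc pd i (pd j (fun y => f y + g y)) x
      = pd i (fun y => pd j f y + pd j g y) x := pd_congr (fun y hy => pd_add hf hg hy j) hx i
    _ = pd i (pd j f) x + pd i (pd j g) x := pd_add (hf.pd j) (hg.pd j) hx i

lemma pd2_sub {f g : E m → ℝ} (hf : Sm m f) (hg : Sm m g) {x : E m} (hx : x ∈ Ball m)
    (i j : Fin m) :
    pd i (pd j (fun y => f y - g y)) x = pd i (pd j f) x - pd i (pd j g) x :=
  calc pd i (pd j (fun y => f y - g y)) x
      = pd i (fun y => pd j f y - pd j g y) x := pd_congr (fun y hy => pd_sub hf hg hy j) hx i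
    _ = pd i (pd j f) x - pd i (pd j g) x := pd_sub (hf.pd j) (hg.pd j) hx i

lemma pd2_const_mul {f : E m → ℝ} (hf : Sm m f) (c : ℝ) {x : E m} (hx : x ∈ Ball m)
    (i j : Fin m) :
    pd i (pd j (fun y => c * f y)) x = c * pd i (pd j f) x :=
  calc pd i (pd j (fun y => c * f y)) x
      = pd i (fun y => c * pd j f y) x := pd_congr (fun y hy => pd_const_mul hf c hy j) hx i
    _ = c * pd i (pd j f) x := pd_const_mul (hf.pd j) c hx i

lemma pd2_sum {g : Fin m → E m → ℝ} (hg : ∀ k, Sm m (g k)) {x : E m} (hx : x ∈ Ball m)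
    (i j : Fin m) :
    pd i (pd j (fun y => ∑ k, g k y)) x = ∑ k, pd i (pd j (g k)) x :=
  calc pd i (pd j (fun y => ∑ k, g k y)) x
      = pd i (fun y => ∑ k, pd j (g k) y) x := pd_congr (fun y hy => pd_sum hg hy j) hx i
    _ = ∑ k, pd i (pd j (g k)) x := pd_sum (fun k => (hg k).pd j) hx i

lemma pd2_half_add {A B : E m → ℝ} (hA : Sm m A) (hB : Sm m B) {x : E m} (hx : x ∈ Ball m)
    (i j : Fin m) :
    pd i (pd j (fun y => (1/2 : ℝ) * (A y + B y))) x
      = (1/2 : ℝ) * (pd i (pd j A) x + pd i (pd j B) x) := by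
  rw [pd2_const_mul (hA.add hB) (1/2) hx i j, pd2_add hA hB hx i j]

/-- The double divergence of the symmetrized gradient of a divergence-free field vanishes. -/
lemma symgrad_term {v : Fin m → E m → ℝ} (hv : ∀ k, Sm m (v k))
    (hdiv : ∀ y ∈ Ball m, ∑ k, pd k (v k) y = 0) {x : E m} (hx : x ∈ Ball m) :
    ∑ i, ∑ j, pd i (pd j (fun y => (1/2 : ℝ) * (pd i (v j) y + pd j (v i) y))) x = 0 := by
  calc ∑ i, ∑ j, pd i (pd j (fun y => (1/2 : ℝ) * (pd i (v j) y + pd j (v i) y))) x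
      = ∑ i, ∑ j, (1/2 : ℝ) * (pd i (pd j (pd i (v j))) x + pd i (pd j (pd j (v i))) x) :=
        Finset.sum_congr rfl fun i _ => Finset.sum_congr rfl fun j _ =>
          pd2_half_add ((hv j).pd i) ((hv i).pd j) hx i j
    _ = 0 := by
        simp only [mul_add, Finset.sum_add_distrib, ← Finset.mul_sum]
        rw [sum_pd3_a hv hdiv hx, sum_pd3_b hv hdiv hx]
        norm_num

lemma diam_term {u : E m → ℝ} (hu : Sm m u) {x : E m} (hx : x ∈ Ball m) :
    ∑ i, ∑ j, pd i (pd j (diam i j u)) x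
      = lap (lap u) x - (1/(m:ℝ)) * lap (lap u) x := by
  have hlap : Sm m (lap u) := hu.lap
  have expand : ∀ i j : Fin m, pd i (pd j (diam i j u)) x
      = pd i (pd j (pd i (pd j u))) x
        - (if i = j then (1:ℝ) else 0)/m * pd i (pd j (lap u)) x := by
    intro i j
    calc pd i (pd j (diam i j u)) x
        = pd i (pd j (fun y => pd i (pd j u) y
            - (fun z => ((if i = j then (1:ℝ) else 0)/m) * lap u z) y)) x := rfl
      _ = pd i (pd j (pd i (pd j u))) x
          - pd i (pd j (fun z => ((if i = j then (1:ℝ) else 0)/m) * lap u z)) x :=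
          pd2_sub ((hu.pd j).pd i) (hlap.const_mul _) hx i j
      _ = _ := by rw [pd2_const_mul hlap _ hx i j]
  have four : ∀ i : Fin m, ∑ j, pd i (pd j (pd i (pd j u))) x = pd i (pd i (lap u)) x := by
    intro i
    calc ∑ j, pd i (pd j (pd i (pd j u))) x
        = ∑ j, pd i (pd i (pd j (pd j u))) x :=
          Finset.sum_congr rfl fun j _ =>
            pd_congr (fun y hy => pd_comm (hu.pd j) hy j i) hx i
      _ = pd i (pd i (fun y => ∑ j, pd j (pd j u) y)) x :=
          (pd2_sum (fun j => (hu.pd j).pd j) hx i i).symm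
      _ = pd i (pd i (lap u)) x := rfl
  have delta : ∀ i : Fin m,
      ∑ j, (if i = j then (1:ℝ) else 0)/m * pd i (pd j (lap u)) x
        = (1/(m:ℝ)) * pd i (pd i (lap u)) x := by
    intro i
    rw [Finset.sum_eq_single i]
    · simp
    · intro b _ hb
      simp [Ne.symm hb, (show ¬ (i = b) from fun h => hb h.symm)]
    · simp
  calc ∑ i, ∑ j, pd i (pd j (diam i j u)) x
      = ∑ i, ∑ j, (pd i (pd j (pd i (pd j u))) x
          - (if i = j then (1:ℝ) else 0)/m * pd i (pd j (lap u)) x) :=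
        Finset.sum_congr rfl fun i _ => Finset.sum_congr rfl fun j _ => expand i j
    _ = ∑ i, (pd i (pd i (lap u)) x - (1/(m:ℝ)) * pd i (pd i (lap u)) x) := by
        refine Finset.sum_congr rfl fun i _ => ?_
        rw [Finset.sum_sub_distrib, four i, delta i]
    _ = lap (lap u) x - (1/(m:ℝ)) * lap (lap u) x := by
        rw [Finset.sum_sub_distrib, ← Finset.mul_sum]
        rfl

theorem scalar_potential_of_Nth_is_biharmonic
    (m : ℕ) (hm : 2 ≤ m)
    (N : Fin m → E m → ℝ)
    (hN_smooth : ∃ U : Set (E m), IsOpen U ∧ Ball m ⊆ U ∧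
      ∀ i, ContDiffOn ℝ (⊤ : ℕ∞) (N i) U)
    (hN_div : ∀ x ∈ Ball m, ∑ i, pd i (N i) x = 0)
    (hN_tang : ∀ x ∈ Sph m, ∑ k, N k x * x k = 0)
    (hN_curlLap : ∀ x ∈ Ball m, ∀ j k, pd j (lap (N k)) x = pd k (lap (N j)) x)
    -- a decomposition of t_ij = ½(∂_i N_j + ∂_j N_i) as in the rank-2 theorem:
    (u : E m → ℝ) (w : Fin m → E m → ℝ) (T : Fin m → Fin m → E m → ℝ)
    (hu : ContDiffOn ℝ (⊤ : ℕ∞) u (Ball m))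
    (hw : ∀ i, ContDiffOn ℝ (⊤ : ℕ∞) (w i) (Ball m))
    (hT : ∀ i j, ContDiffOn ℝ (⊤ : ℕ∞) (T i j) (Ball m))
    (hdec : ∀ x ∈ Ball m, ∀ i j,
      (1/2) * (pd i (N j) x + pd j (N i) x) =
        diam i j u x + (1/2) * (pd i (w j) x + pd j (w i) x) + T i j x)
    (hu_bdry : ∀ x ∈ Sph m, u x = 0)
    (hw_div : ∀ x ∈ Ball m, ∑ i, pd i (w i) x = 0)
    (hw_tang : ∀ x ∈ Sph m, ∑ k, w k x * x k = 0)
    (hw_curl : ∀ x ∈ Sph m, ∀ v : E m, (∑ k, v k * x k) = 0 →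
      ∑ k, ∑ l, (pd k (w l) x - pd l (w k) x) * x k * v l = 0)
    (hT_symm : ∀ x ∈ Ball m, ∀ i j, T i j x = T j i x)
    (hT_trace : ∀ x ∈ Ball m, ∑ i, T i i x = 0)
    (hT_transv : ∀ x ∈ Ball m, ∀ j, ∑ i, pd i (T i j) x = 0) :
    ∀ x ∈ Ball m, lap (lap u) x = 0 := by
  obtain ⟨U, hUopen, hUsub, hNU⟩ := hN_smooth
  have hN : ∀ i, Sm m (N i) := fun i => ((hNU i).mono hUsub).of_le (by simp)
  have hu' : Sm m u := hu.of_le (by simp)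
  have hw' : ∀ i, Sm m (w i) := fun i => (hw i).of_le (by simp)
  have hT' : ∀ i j, Sm m (T i j) := fun i j => (hT i j).of_le (by simp)
  intro x hx
  set L := lap (lap u) x with hL
  have key : (0 : ℝ) = (L - (1/(m:ℝ)) * L + 0) + 0 := by
    calc (0 : ℝ)
        = ∑ i, ∑ j, pd i (pd j
            (fun y => (1/2 : ℝ) * (pd i (N j) y + pd j (N i) y))) x :=
          (symgrad_term hN hN_div hx).symm
      _ = ∑ i, ∑ j, pd i (pd j
            (fun y => diam i j u y + (1/2 : ℝ) * (pd i (w j) y + pd j (w i) y) + T i j y)) x :=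
          Finset.sum_congr rfl fun i _ => Finset.sum_congr rfl fun j _ =>
            pd2_congr (fun y hy => hdec y hy i j) hx i j
      _ = ∑ i, ∑ j, (pd i (pd j (diam i j u)) x
            + pd i (pd j (fun y => (1/2 : ℝ) * (pd i (w j) y + pd j (w i) y))) x
            + pd i (pd j (T i j)) x) := by
          refine Finset.sum_congr rfl fun i _ => Finset.sum_congr rfl fun j _ => ?_
          have hdiam : Sm m (diam i j u) :=
            Sm.sub ((hu'.pd j).pd i) ((hu'.lap).const_mul _)
          have hH : Sm m (fun y => (1/2 : ℝ) * (pd i (w j) y + pd j (w i) y)) :=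
            Sm.const_mul (Sm.add ((hw' j).pd i) ((hw' i).pd j)) _
          rw [pd2_add (hdiam.add hH) (hT' i j) hx i j, pd2_add hdiam hH hx i j]
      _ = (L - (1/(m:ℝ)) * L + 0) + 0 := by
          simp only [Finset.sum_add_distrib]
          rw [diam_term hu' hx, symgrad_term hw' hw_div hx, sum_T_zero hT' hT_transv hx]
  have hm' : (2:ℝ) ≤ (m:ℝ) := by exact_mod_cast hm
  have h1 : L * (1 - 1/(m:ℝ)) = 0 := by linarith [key]
  have h2 : (1 : ℝ) - 1/(m:ℝ) ≠ 0 := by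
    have : 1/(m:ℝ) < 1 := by
      rw [div_lt_one (by linarith)]
      linarith
    intro h; linarith
  have := mul_eq_zero.1 h1
  tauto

end
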